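/- arXiv:0905.2215 — 3 statements merged into one kernel-verified Lean document; each statement's English description precedes it below -/
import Mathlib

section
/- Let B be a finite-dimensional Hopf algebra with bijective antipode and H(B*) its Heisenberg double with the D(B)-module structure of the 'heterotic' action. For the universal R-matrix R = Σ_I (ε ⊗ e_I) ⊗ (e^I ⊗ 1) of D(B), the half R-commutativity relation (R⁽²⁾ ▷ (ε # b))(R⁽¹⁾ ▷ (α # 1)) = α # b holds for all α ∈ B* and b ∈ B. -/
/-!
On the `e_I` side the counit makes `R⁽¹⁾ ▷ (α # 1) = (e_I ⇀ α) # 1`. On the `e^I` side, writing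
`Δ²(e^I)` through the dual basis twisted by the antipode gives
`R⁽²⁾ ▷ (ε # b) = ∑_{J,K} e^I(S⁻¹e_J S⁻¹e_K ·) e^K # (b ↼ e^J)`. After multiplying in `H(B*)`,
the contraction over `I` and `K` collapses, through `S⁻¹(x₂) x₁ = ε(x)`, to
`∑ (b₂ S⁻¹(b₁) ⇀ α) # b₃`, and `b₂ S⁻¹(b₁) ⊗ b₃ = 1 ⊗ b`.
-/

open TensorProduct

noncomputable section

variable {k B : Type*} [Field k] [Ring B] [HopfAlgebra k B]

/-- Convolution product on the dual `B*`. -/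
def dualMul (α β : Module.Dual k B) : Module.Dual k B :=
  (TensorProduct.lift ((LinearMap.mul k k).compl₁₂ α β)).comp Coalgebra.comul

/-- Left regular action of `B` on `B*`: `(a ⇀ β)(x) = β (x * a)`. -/
def lact (a : B) (β : Module.Dual k B) : Module.Dual k B :=
  β.comp (LinearMap.mulRight k a)

/-- Right action of `B*` on `B`: `a ↼ ν = ⟨ν, a'⟩ a''`. -/
def rlact (ν : Module.Dual k B) : B →ₗ[k] B :=
  (TensorProduct.lid k B).toLinearMap ∘ₗ (TensorProduct.map ν LinearMap.id) ∘ₗ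
    (Coalgebra.comul : B →ₗ[k] B ⊗[k] B)

open Coalgebra HopfAlgebra

lemma lact_one (β : Module.Dual k B) : lact 1 β = β := by
  ext x; simp [lact]

variable (k) in
def lactₗ (β : Module.Dual k B) : B →ₗ[k] Module.Dual k B :=
  LinearMap.llcomp k B B k β ∘ₗ (LinearMap.mul k B).flip

@[simp] lemma lactₗ_apply (β : Module.Dual k B) (a : B) : lactₗ k β a = lact a β := rfl

lemma rlact_counit (a : B) : rlact (counit : Module.Dual k B) a = a := by
  change TensorProduct.lid k B (counit.rTensor B (comul a)) = a
  simp

lemma counit_rlact (ν : Module.Dual k B) (a : B) : counit (rlact ν a) = ν a := by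
  have h : a = TensorProduct.rid k B (counit.lTensor B (comul a)) := by simp
  conv_rhs => rw [h]
  simp only [rlact, LinearMap.comp_apply, LinearEquiv.coe_coe]
  induction comul (R := k) a with
  | zero => simp
  | tmul p q => simp [mul_comm]
  | add s t hs ht => simp_all

lemma dualMul_apply (β γ : Module.Dual k B) (x : B) : dualMul β γ x = γ (rlact β x) := by
  simp only [dualMul, rlact, LinearMap.comp_apply]
  induction comul (R := k) x with
  | zero => simp
  | tmul p q => simp
  | add s t hs ht => simp [hs, ht]

lemma dualMul_counit (β : Module.Dual k B) : dualMul β counit = β := by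
  ext x; rw [dualMul_apply, counit_rlact]

lemma counit_dualMul (γ : Module.Dual k B) : dualMul counit γ = γ := by
  ext x; rw [dualMul_apply, rlact_counit]

lemma counit_comp_of_rightInverse {Sinv : B →ₗ[k] B}
    (hS : Function.RightInverse Sinv (antipode k)) :
    counit ∘ₗ Sinv = (counit : Module.Dual k B) := by
  ext x; simpa [hS x] using (counit_antipode (R := k) (Sinv x)).symm

section Basis

variable {ι : Type*} [Fintype ι] (bB : Module.Basis ι k B)

lemma sum_coord_smul {M : Type*} [AddCommMonoid M] [Module k M] (F : B →ₗ[k] M) (z : B) :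
    ∑ i, bB.coord i z • F (bB i) = F z := by
  conv_rhs => rw [← bB.sum_repr z, map_sum]
  simp only [map_smul, Module.Basis.coord_apply]

lemma comul_eq_sum (a : B) : comul (R := k) a = ∑ i, bB i ⊗ₜ[k] rlact (bB.coord i) a := by
  simp only [rlact, LinearMap.comp_apply, LinearEquiv.coe_coe]
  induction comul (R := k) a with
  | zero => simp
  | tmul p q =>
    simp only [map_tmul, TensorProduct.lid_tmul, LinearMap.id_apply, TensorProduct.tmul_smul,
      TensorProduct.smul_tmul', Module.Basis.coord_apply]
    rw [← TensorProduct.sum_tmul, bB.sum_repr]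
  | add s t hs ht =>
    conv_lhs => rw [hs, ht]
    simp only [map_add, TensorProduct.tmul_add, Finset.sum_add_distrib]

lemma rlact_eq_sum (ν : Module.Dual k B) (a : B) :
    rlact ν a = ∑ i, ν (bB i) • rlact (bB.coord i) a := by
  conv_lhs => rw [rlact, LinearMap.comp_apply, LinearMap.comp_apply, comul_eq_sum bB]
  simp

lemma dualMul_apply_eq_sum (β γ : Module.Dual k B) (x : B) :
    dualMul β γ x = ∑ i, β (bB i) * γ (rlact (bB.coord i) x) := by
  simp [dualMul_apply, rlact_eq_sum bB β x]

lemma rTensor_comul_comul_eq_sum (a : B) :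
    (comul (R := k)).rTensor B (comul a) =
      ∑ i, ∑ j, (bB i ⊗ₜ[k] bB j) ⊗ₜ[k] rlact (bB.coord j) (rlact (bB.coord i) a) := by
  rw [← coassoc_symm_apply, comul_eq_sum bB a]
  simp [comul_eq_sum bB (rlact _ a), TensorProduct.tmul_sum]

lemma sum_mul_antipode_rlact (a : B) :
    ∑ i, bB i * antipode k (rlact (bB.coord i) a) = counit (R := k) a • (1 : B) := by
  simpa [comul_eq_sum bB a, Algebra.algebraMap_eq_smul_one] using
    mul_antipode_lTensor_comul_apply (R := k) a

lemma sum_antipode_mul_rlact (a : B) :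
    ∑ i, antipode k (bB i) * rlact (bB.coord i) a = counit (R := k) a • (1 : B) := by
  simpa [comul_eq_sum bB a, Algebra.algebraMap_eq_smul_one] using
    mul_antipode_rTensor_comul_apply (R := k) a

variable {Sinv : B →ₗ[k] B}

lemma sum_rlact_mul_sinv (hS : Function.RightInverse Sinv (antipode k))
    (hS' : Function.LeftInverse Sinv (antipode k)) (a : B) :
    ∑ i, rlact (bB.coord i) a * Sinv (bB i) = counit (R := k) a • (1 : B) := by
  apply hS'.injective
  simp [antipode_mul_antidistrib, hS _, sum_mul_antipode_rlact]

lemma sum_sinv_rlact_mul (hS : Function.RightInverse Sinv (antipode k))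
    (hS' : Function.LeftInverse Sinv (antipode k)) (a : B) :
    ∑ i, Sinv (rlact (bB.coord i) a) * bB i = counit (R := k) a • (1 : B) := by
  apply hS'.injective
  simp [antipode_mul_antidistrib, hS _, sum_antipode_mul_rlact]

lemma sum_sum_mul_sinv_tmul_rlact (hS : Function.RightInverse Sinv (antipode k))
    (hS' : Function.LeftInverse Sinv (antipode k)) (b : B) :
    ∑ i, ∑ j, (bB j * Sinv (bB i)) ⊗ₜ[k] rlact (bB.coord j) (rlact (bB.coord i) b) =
      1 ⊗ₜ[k] b := by
  let G := (TensorProduct.lift ((LinearMap.mul k B).flip ∘ₗ Sinv)).rTensor B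
  calc _ = G ((comul (R := k)).rTensor B (comul b)) := by
        simp [G, rTensor_comul_comul_eq_sum bB]
    _ = ∑ i, (∑ j, rlact (bB.coord j) (bB i) * Sinv (bB j)) ⊗ₜ[k] rlact (bB.coord i) b := by
        simp [G, comul_eq_sum bB b, comul_eq_sum bB (bB _), TensorProduct.sum_tmul]
    _ = 1 ⊗ₜ[k] b := by
        simp_rw [sum_rlact_mul_sinv bB hS hS', TensorProduct.smul_tmul, ← TensorProduct.tmul_sum]
        rw [← rlact_eq_sum, rlact_counit]

lemma sum_coord_antipode_smul (hS' : Function.LeftInverse Sinv (antipode k)) (x : B) :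
    ∑ i, bB.coord i (antipode k x) • Sinv (bB i) = x := by
  rw [sum_coord_smul bB Sinv, hS']

lemma sum_sum_dualMul_coord_comp_mulLeft_smul (hS : Function.RightInverse Sinv (antipode k))
    (hS' : Function.LeftInverse Sinv (antipode k)) (u z : B) :
    ∑ i, ∑ j, dualMul (bB.coord i ∘ₗ LinearMap.mulLeft k (Sinv u * Sinv (bB j))) (bB.coord j) z •
      bB i = counit (R := k) z • Sinv u := by
  simp only [dualMul_apply_eq_sum bB, LinearMap.comp_apply, LinearMap.mulLeft_apply,
    Finset.sum_smul]
  rw [Finset.sum_comm]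
  calc _ = ∑ j, ∑ l, bB.coord j (rlact (bB.coord l) z) • (Sinv u * Sinv (bB j) * bB l) := by
        refine Finset.sum_congr rfl fun j _ => ?_
        rw [Finset.sum_comm]
        refine Finset.sum_congr rfl fun l _ => ?_
        simp_rw [mul_comm _ (bB.coord j _), mul_smul, ← Finset.smul_sum,
          Module.Basis.coord_apply, bB.sum_repr]
    _ = ∑ l, Sinv u * (Sinv (rlact (bB.coord l) z) * bB l) := by
        rw [Finset.sum_comm]
        refine Finset.sum_congr rfl fun l _ => ?_
        simpa [mul_assoc] using sum_coord_smul bB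
          (LinearMap.mulLeft k (Sinv u) ∘ₗ LinearMap.mulRight k (bB l) ∘ₗ Sinv) _
    _ = counit (R := k) z • Sinv u := by
        rw [← Finset.mul_sum, sum_sinv_rlact_mul bB hS hS', mul_smul_comm, mul_one]

lemma sum_sum_dualMul_dualMul_lact (hS : Function.RightInverse Sinv (antipode k))
    (hS' : Function.LeftInverse Sinv (antipode k)) (α : Module.Dual k B) (u v : B) :
    ∑ i, ∑ j, dualMul (dualMul (bB.coord i ∘ₗ LinearMap.mulLeft k (Sinv u * Sinv (bB j)))
      (bB.coord j)) (lact v (lact (bB i) α)) = lact (v * Sinv u) α := by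
  ext x
  simp only [LinearMap.coe_sum, Finset.sum_apply, dualMul_apply_eq_sum bB _ (lact _ _)]
  conv_lhs => arg 2; ext i; rw [Finset.sum_comm]
  rw [Finset.sum_comm]
  calc _ = ∑ l, α (rlact (bB.coord l) x * v * ∑ i, ∑ j,
        dualMul (bB.coord i ∘ₗ LinearMap.mulLeft k (Sinv u * Sinv (bB j))) (bB.coord j) (bB l) •
          bB i) := by
        simp [lact, map_sum, Finset.mul_sum]
    _ = ∑ l, counit (R := k) (bB l) * α (rlact (bB.coord l) x * v * Sinv u) := by
        simp_rw [sum_sum_dualMul_coord_comp_mulLeft_smul bB hS hS', mul_smul_comm, map_smul,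
          smul_eq_mul]
    _ = lact (v * Sinv u) α x := by
        conv_rhs => rw [← rlact_counit (k := k) x, rlact_eq_sum bB]
        simp [lact, map_sum, mul_assoc]

end Basis

section DoubleAction

variable {ι : Type*} [Fintype ι] (bB : Module.Basis ι k B) {Sinv : B →ₗ[k] B}

/-- The product of `H(B*)`: `(α # a)(β # b) = α (a₁ ⇀ β) # a₂ b`, for every way of writing `Δ a`. -/
def IsHeisenbergMul (hmul : (Module.Dual k B ⊗[k] B) →ₗ[k] (Module.Dual k B ⊗[k] B) →ₗ[k]
    (Module.Dual k B ⊗[k] B)) : Prop :=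
  ∀ (α β : Module.Dual k B) (a b : B) (n : ℕ) (a1 a2 : Fin n → B),
    comul (R := k) a = ∑ i, a1 i ⊗ₜ[k] a2 i →
    hmul (α ⊗ₜ[k] a) (β ⊗ₜ[k] b) = ∑ i, (dualMul α (lact (a1 i) β)) ⊗ₜ[k] (a2 i * b)

/-- The heterotic action `(μ ⊗ m) ▷ (α # a)` of `D(B)` on `H(B*)`, for every way of writing
`Δ²μ` and `Δ²m`. -/
def IsHeteroticAction (Sinv : B →ₗ[k] B) (act : (Module.Dual k B ⊗[k] B) →ₗ[k]
    (Module.Dual k B ⊗[k] B) →ₗ[k] (Module.Dual k B ⊗[k] B)) : Prop :=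
  ∀ (μ : Module.Dual k B) (m : B) (α : Module.Dual k B) (a : B)
    (N : ℕ) (μ1 μ2 μ3 : Fin N → Module.Dual k B)
    (_ : ∀ x y z : B, μ (x * y * z) = ∑ i, μ1 i x * μ2 i y * μ3 i z)
    (M : ℕ) (m1 m2 m3 : Fin M → B)
    (_ : (TensorProduct.map (comul (R := k)) LinearMap.id) (comul (R := k) m) =
      ∑ j, (m1 j ⊗ₜ[k] m2 j) ⊗ₜ[k] m3 j),
    act (μ ⊗ₜ[k] m) (α ⊗ₜ[k] a) = ∑ i, ∑ j,
      (dualMul (dualMul (μ3 i) (lact (m1 j) α)) ((μ2 i).comp Sinv)) ⊗ₜ[k]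
        (rlact ((μ1 i).comp Sinv) (m2 j * a * antipode k (m3 j)))

namespace IsHeisenbergMul

variable {hmul : (Module.Dual k B ⊗[k] B) →ₗ[k] (Module.Dual k B ⊗[k] B) →ₗ[k]
    (Module.Dual k B ⊗[k] B)}

lemma tmul_tmul_eq_sum (h : IsHeisenbergMul hmul) (α β : Module.Dual k B) (a b : B) :
    hmul (α ⊗ₜ[k] a) (β ⊗ₜ[k] b) =
      ∑ i, dualMul α (lact (bB i) β) ⊗ₜ[k] (rlact (bB.coord i) a * b) := by
  let e := (Fintype.equivFin ι).symm
  rw [h α β a b _ (bB ∘ e) (fun n ↦ rlact (bB.coord (e n)) a)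
    (by rw [comul_eq_sum bB a]; exact (e.sum_comp _).symm)]
  exact e.sum_comp (fun i ↦ dualMul α (lact (bB i) β) ⊗ₜ[k] (rlact (bB.coord i) a * b))

end IsHeisenbergMul

namespace IsHeteroticAction

variable {act : (Module.Dual k B ⊗[k] B) →ₗ[k] (Module.Dual k B ⊗[k] B) →ₗ[k]
    (Module.Dual k B ⊗[k] B)}

lemma tmul_tmul_eq_sum (h : IsHeteroticAction Sinv act) {κ₁ κ₂ : Type*} [Fintype κ₁] [Fintype κ₂]
    (μ : Module.Dual k B) (m : B) (α : Module.Dual k B) (a : B)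
    (μ1 μ2 μ3 : κ₁ → Module.Dual k B)
    (hμ : ∀ x y z : B, μ (x * y * z) = ∑ i, μ1 i x * μ2 i y * μ3 i z)
    (m1 m2 m3 : κ₂ → B)
    (hm : (comul (R := k)).rTensor B (comul m) = ∑ j, (m1 j ⊗ₜ[k] m2 j) ⊗ₜ[k] m3 j) :
    act (μ ⊗ₜ[k] m) (α ⊗ₜ[k] a) = ∑ i, ∑ j,
      (dualMul (dualMul (μ3 i) (lact (m1 j) α)) ((μ2 i).comp Sinv)) ⊗ₜ[k]
        (rlact ((μ1 i).comp Sinv) (m2 j * a * antipode k (m3 j))) := by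
  let e := (Fintype.equivFin κ₁).symm
  let e' := (Fintype.equivFin κ₂).symm
  rw [h μ m α a _ (μ1 ∘ e) (μ2 ∘ e) (μ3 ∘ e) (fun x y z ↦ by rw [hμ]; exact (e.sum_comp _).symm)
    _ (m1 ∘ e') (m2 ∘ e') (m3 ∘ e')
    (by rw [← LinearMap.rTensor_def, hm]; exact (e'.sum_comp _).symm)]
  exact Fintype.sum_equiv e _ _ fun _ ↦ Fintype.sum_equiv e' _ _ fun _ ↦ rfl

lemma counit_tmul_tmul_one [FiniteDimensional k B] (h : IsHeteroticAction Sinv act)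
    (hS : Function.RightInverse Sinv (antipode k)) (m : B) (α : Module.Dual k B) :
    act ((counit : Module.Dual k B) ⊗ₜ[k] m) (α ⊗ₜ[k] 1) = lact m α ⊗ₜ[k] 1 := by
  let b₀ := Module.finBasis k B
  rw [h.tmul_tmul_eq_sum (κ₁ := Unit) _ _ _ _ (fun _ ↦ counit) (fun _ ↦ counit) (fun _ ↦ counit)
    (by simp [Bialgebra.counit_mul]) (fun p : _ × _ ↦ b₀ p.1) (fun p ↦ b₀ p.2)
    (fun p ↦ rlact (b₀.coord p.2) (rlact (b₀.coord p.1) m))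
    (by rw [rTensor_comul_comul_eq_sum b₀, Fintype.sum_prod_type])]
  simp only [Fintype.sum_prod_type, counit_comp_of_rightInverse hS, counit_dualMul, dualMul_counit,
    rlact_counit, mul_one, Finset.univ_unique, Finset.sum_singleton, ← TensorProduct.tmul_sum,
    sum_mul_antipode_rlact, counit_rlact, TensorProduct.tmul_smul]
  simpa using sum_coord_smul b₀ ((TensorProduct.mk k _ B).flip 1 ∘ₗ lactₗ k α) m

lemma tmul_one_counit_tmul (h : IsHeteroticAction Sinv act)
    (hS : Function.RightInverse Sinv (antipode k)) (hS' : Function.LeftInverse Sinv (antipode k))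
    (μ : Module.Dual k B) (b : B) :
    act (μ ⊗ₜ[k] 1) ((counit : Module.Dual k B) ⊗ₜ[k] b) = ∑ i, ∑ j,
      dualMul (μ ∘ₗ LinearMap.mulLeft k (Sinv (bB i) * Sinv (bB j))) (bB.coord j) ⊗ₜ[k]
        rlact (bB.coord i) b := by
  have hSSinv : antipode k ∘ₗ Sinv = LinearMap.id := LinearMap.ext hS
  -- `Δ²μ = ∑ (e^J ∘ S) ⊗ (e^K ∘ S) ⊗ μ(S⁻¹e_J S⁻¹e_K ·)`, so that the `∘ S⁻¹` of the action cancels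
  rw [h.tmul_tmul_eq_sum (κ₂ := Unit) _ _ _ _
    (fun p : ι × ι ↦ bB.coord p.1 ∘ₗ antipode k) (fun p ↦ bB.coord p.2 ∘ₗ antipode k)
    (fun p ↦ μ ∘ₗ LinearMap.mulLeft k (Sinv (bB p.1) * Sinv (bB p.2)))
    (fun x y z ↦ by
      conv_lhs => rw [← sum_coord_antipode_smul bB hS' x, ← sum_coord_antipode_smul bB hS' y]
      simp [Fintype.sum_prod_type, Finset.sum_mul, Finset.mul_sum, map_sum, mul_assoc]
      rw [Finset.sum_comm]
      simp only [mul_left_comm])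
    (fun _ ↦ 1) (fun _ ↦ 1) (fun _ ↦ 1)
    (by simp [Bialgebra.comul_one, Algebra.TensorProduct.one_def])]
  simp [Fintype.sum_prod_type, lact_one, dualMul_counit, LinearMap.comp_assoc, hSSinv]

end IsHeteroticAction

end DoubleAction

theorem heisenberg_double_half_R_commutativity
    [FiniteDimensional k B]
    {ι : Type*} [Fintype ι] (bB : Module.Basis ι k B)
    (S : B →ₗ[k] B) (hSdef : S = HopfAlgebra.antipode (R := k) (A := B))
    (Sinv : B →ₗ[k] B)
    (hSinv : ∀ x : B, S (Sinv x) = x ∧ Sinv (S x) = x)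
    (hmul : (Module.Dual k B ⊗[k] B) →ₗ[k] (Module.Dual k B ⊗[k] B) →ₗ[k]
        (Module.Dual k B ⊗[k] B))
    (hmul_def : ∀ (α β : Module.Dual k B) (a b : B) (n : ℕ) (a1 a2 : Fin n → B),
        Coalgebra.comul (R := k) a = ∑ i, a1 i ⊗ₜ[k] a2 i →
        hmul (α ⊗ₜ[k] a) (β ⊗ₜ[k] b)
          = ∑ i, (dualMul α (lact (a1 i) β)) ⊗ₜ[k] (a2 i * b))
    (act : (Module.Dual k B ⊗[k] B) →ₗ[k] (Module.Dual k B ⊗[k] B) →ₗ[k]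
        (Module.Dual k B ⊗[k] B))
    (act_def : ∀ (μ : Module.Dual k B) (m : B) (α : Module.Dual k B) (a : B)
        (N : ℕ) (μ1 μ2 μ3 : Fin N → Module.Dual k B)
        (_ : ∀ x y z : B, μ (x * y * z) = ∑ i, μ1 i x * μ2 i y * μ3 i z)
        (M : ℕ) (m1 m2 m3 : Fin M → B)
        (_ : (TensorProduct.map (Coalgebra.comul (R := k)) LinearMap.id)
              (Coalgebra.comul (R := k) m) = ∑ j, (m1 j ⊗ₜ[k] m2 j) ⊗ₜ[k] m3 j),
        act (μ ⊗ₜ[k] m) (α ⊗ₜ[k] a)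
          = ∑ i, ∑ j,
              (dualMul (dualMul (μ3 i) (lact (m1 j) α)) ((μ2 i).comp Sinv))
                ⊗ₜ[k] (rlact ((μ1 i).comp Sinv) (m2 j * a * S (m3 j)))) :
    -- `(R⁽²⁾ ▷ (ε # b))(R⁽¹⁾ ▷ (α # 1)) = α # b`, with
    -- `R = ∑_I (ε ⊗ e_I) ⊗ (e^I ⊗ 1)`, `R⁽¹⁾ = ε ⊗ e_I`, `R⁽²⁾ = e^I ⊗ 1`.
    ∀ (α : Module.Dual k B) (b : B),
      ∑ I : ι,
        hmul
          (act ((bB.coord I : Module.Dual k B) ⊗ₜ[k] (1 : B))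
            ((Coalgebra.counit : Module.Dual k B) ⊗ₜ[k] b))
          (act ((Coalgebra.counit : Module.Dual k B) ⊗ₜ[k] bB I)
            (α ⊗ₜ[k] (1 : B)))
        = α ⊗ₜ[k] b := by
  subst hSdef
  intro α b
  have hS : Function.RightInverse Sinv (antipode k) := fun x ↦ (hSinv x).1
  have hS' : Function.LeftInverse Sinv (antipode k) := fun x ↦ (hSinv x).2
  calc _ = ∑ i, ∑ j, ∑ l, ∑ p,
        dualMul (dualMul (bB.coord i ∘ₗ LinearMap.mulLeft k (Sinv (bB j) * Sinv (bB l)))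
          (bB.coord l)) (lact (bB p) (lact (bB i) α)) ⊗ₜ[k]
            rlact (bB.coord p) (rlact (bB.coord j) b) := by
        simp only [IsHeteroticAction.tmul_one_counit_tmul bB act_def hS hS',
          IsHeteroticAction.counit_tmul_tmul_one act_def hS, map_sum, LinearMap.coe_sum,
          Finset.sum_apply, IsHeisenbergMul.tmul_tmul_eq_sum bB hmul_def, mul_one]
    _ = ∑ j, ∑ p, (∑ i, ∑ l,
        dualMul (dualMul (bB.coord i ∘ₗ LinearMap.mulLeft k (Sinv (bB j) * Sinv (bB l)))
          (bB.coord l)) (lact (bB p) (lact (bB i) α))) ⊗ₜ[k]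
            rlact (bB.coord p) (rlact (bB.coord j) b) := by
        simp only [TensorProduct.sum_tmul]
        rw [Finset.sum_comm]
        refine Finset.sum_congr rfl fun j _ ↦ ?_
        conv_lhs => arg 2; ext i; rw [Finset.sum_comm]
        rw [Finset.sum_comm]
    _ = ∑ j, ∑ p, lact (bB p * Sinv (bB j)) α ⊗ₜ[k] rlact (bB.coord p) (rlact (bB.coord j) b) := by
        simp only [sum_sum_dualMul_dualMul_lact bB hS hS']
    _ = α ⊗ₜ[k] b := by
        simpa [lact_one] using
          congrArg ((lactₗ k α).rTensor B) (sum_sum_mul_sinv_tmul_rlact bB hS hS' b)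
end
end

section
/- Let q be a primitive 2p-th root of unity and let A be the ℂ-algebra generated by z and ∂ with relations z^p = 0, ∂^p = 0, and ∂z = (q − q⁻¹)·1 + q⁻² z∂. Then A has dimension p² with basis {z^a ∂^b : 0 ≤ a, b ≤ p−1} and is isomorphic as a ℂ-algebra to the full matrix algebra Mat_p(ℂ). -/
/-!
STATEMENT 4: For `q = exp(iπ/p)` a primitive 2p-th root of unity, the ℂ-algebra
`ℂ_q[z,∂]` with relations `z^p = 0`, `∂^p = 0`, `∂z = (q−q⁻¹)·1 + q⁻² z∂` has
dimension `p²` with basis `{z^a ∂^b : 0 ≤ a,b ≤ p−1}` and is isomorphic to `Mat_p(ℂ)`.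
-/

noncomputable section

/-- Relations of `ℂ_q[z,∂]` on the free algebra on two generators `z = X 0`, `∂ = X 1`. -/
inductive cqRel (p : ℕ) (q : ℂ) : FreeAlgebra ℂ (Fin 2) → FreeAlgebra ℂ (Fin 2) → Prop
  | znil : cqRel p q ((FreeAlgebra.ι ℂ (0 : Fin 2)) ^ p) 0
  | dnil : cqRel p q ((FreeAlgebra.ι ℂ (1 : Fin 2)) ^ p) 0
  | dz : cqRel p q
      (FreeAlgebra.ι ℂ (1 : Fin 2) * FreeAlgebra.ι ℂ (0 : Fin 2))
      ((q - q⁻¹) • (1 : FreeAlgebra ℂ (Fin 2)) +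
        ((q ^ 2)⁻¹) • (FreeAlgebra.ι ℂ (0 : Fin 2) * FreeAlgebra.ι ℂ (1 : Fin 2)))

/-- The algebra `ℂ_q[z,∂]`. -/
def CqAlg (p : ℕ) (q : ℂ) : Type := RingQuot (cqRel p q)

instance (p : ℕ) (q : ℂ) : Ring (CqAlg p q) := inferInstanceAs (Ring (RingQuot (cqRel p q)))
instance (p : ℕ) (q : ℂ) : Algebra ℂ (CqAlg p q) :=
  inferInstanceAs (Algebra ℂ (RingQuot (cqRel p q)))

/-- The generator `z` of `ℂ_q[z,∂]`. -/
def Zg (p : ℕ) (q : ℂ) : CqAlg p q :=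
  RingQuot.mkAlgHom ℂ (cqRel p q) (FreeAlgebra.ι ℂ (0 : Fin 2))

/-- The generator `∂` of `ℂ_q[z,∂]`. -/
def Dg (p : ℕ) (q : ℂ) : CqAlg p q :=
  RingQuot.mkAlgHom ℂ (cqRel p q) (FreeAlgebra.ι ℂ (1 : Fin 2))

/-!
The relation `∂z = (q − q⁻¹) + q⁻² z∂` rewrites every word in `z, ∂` as a combination of
normally ordered monomials `z^a ∂^b`, and these vanish unless `a, b < p`; so the `p²` monomials
with `a, b < p` span. Conversely `z` and `∂` act on `ℂ[z]/(z^p)` by multiplication and by the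
`q`-derivative `∂ z^k = c_k z^(k-1)` with `c_k = q (1 − q^(−2k))`; the defining relations hold
there because `c_p = 0`. The matrix of `z^a ∂^b` is supported on one diagonal, starting in row
`a` with the entry `c_1 ⋯ c_b`, which is nonzero because `q²` is a primitive `p`-th root of
unity; by triangularity these `p²` matrices are linearly independent. Hence the monomials form a
basis, and the representation is an isomorphism onto `Mat_p(ℂ)` by counting dimensions.
-/

theorem Submodule.span_range_eq_top_of_mul_mem {R A ι : Type*} [CommSemiring R] [Semiring A]
    [Algebra R A] {s : Set A} (hs : Algebra.adjoin R s = ⊤) {v : ι → A}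
    (h1 : 1 ∈ span R (Set.range v)) (hmul : ∀ i, ∀ x ∈ s, v i * x ∈ span R (Set.range v)) :
    span R (Set.range v) = ⊤ := by
  set M := span R (Set.range v)
  have hM : ∀ m ∈ M, ∀ x ∈ s, m * x ∈ M := fun m hm x hx =>
    (span_le (p := M.comap (LinearMap.mulRight R x))).mpr
      (by rintro _ ⟨i, rfl⟩; exact hmul i x hx) hm
  rw [eq_top_iff]
  rintro x -
  suffices h : ∀ m ∈ M, m * x ∈ M by simpa using h 1 h1
  have hx : x ∈ Algebra.adjoin R s := hs ▸ Algebra.mem_top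
  induction hx using Algebra.adjoin_induction with
  | mem x hx => exact fun m hm => hM m hm x hx
  | algebraMap r =>
    exact fun m hm => by simpa [Algebra.commutes, Algebra.smul_def] using M.smul_mem r hm
  | add x y _ _ hx hy => exact fun m hm => by simpa [mul_add] using M.add_mem (hx m hm) (hy m hm)
  | mul x y _ _ hx hy => exact fun m hm => by simpa [mul_assoc] using hy _ (hx m hm)

theorem LinearMap.bijective_of_linearIndependent_comp_of_span_eq_top {K V W ι : Type*}
    [DivisionRing K] [AddCommGroup V] [Module K V] [AddCommGroup W] [Module K W]
    [FiniteDimensional K W] [Fintype ι] {v : ι → V} (hv : Submodule.span K (Set.range v) = ⊤)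
    (f : V →ₗ[K] W) (hf : LinearIndependent K (f ∘ v))
    (hcard : Fintype.card ι = Module.finrank K W) : Function.Bijective f := by
  let b := Module.Basis.mk hf.of_comp hv.ge
  have : FiniteDimensional K V := .of_basis b
  have hsurj : Function.Surjective f := by
    rw [← LinearMap.range_eq_top, eq_top_iff, ← hf.span_eq_top_of_card_eq_finrank' hcard,
      Submodule.span_le, Set.range_comp]
    exact Set.image_subset_range _ _
  refine ⟨(LinearMap.injective_iff_surjective_of_finrank_eq_finrank ?_).mpr hsurj, hsurj⟩
  rw [Module.finrank_eq_card_basis b, hcard]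

lemma Complex.isPrimitiveRoot_exp_pi_mul_I_div_sq {p : ℕ} (hp : p ≠ 0) :
    IsPrimitiveRoot (Complex.exp (Real.pi * Complex.I / p) ^ 2) p := by
  rw [← Complex.exp_nat_mul]
  convert Complex.isPrimitiveRoot_exp p hp using 2
  push_cast
  ring

namespace CqAlg

section Matrices

def qNum (q : ℂ) (k : ℕ) : ℂ := q * (1 - (q ^ 2)⁻¹ ^ k)

lemma qNum_zero (q : ℂ) : qNum q 0 = 0 := by simp [qNum]

lemma qNum_succ (q : ℂ) (k : ℕ) : qNum q (k + 1) = (q - q⁻¹) + (q ^ 2)⁻¹ * qNum q k := by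
  have h : (q ^ 2)⁻¹ * q = q⁻¹ := by
    rcases eq_or_ne q 0 with rfl | hq
    · simp
    · field_simp
  unfold qNum
  linear_combination (-1 : ℂ) * h

variable {p : ℕ} {q : ℂ}

lemma qNum_self_eq_zero (hq : IsPrimitiveRoot (q ^ 2) p) : qNum q p = 0 := by
  simp [qNum, inv_pow, hq.pow_eq_one]

lemma qNum_ne_zero (hq : IsPrimitiveRoot (q ^ 2) p) {s : ℕ} (hs0 : s ≠ 0) (hsp : s < p) :
    qNum q s ≠ 0 := by
  have hq0 : q ≠ 0 := ne_zero_pow two_ne_zero (hq.ne_zero (by omega))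
  rw [qNum, inv_pow]
  exact mul_ne_zero hq0 <| sub_ne_zero.mpr <| Ne.symm <| inv_ne_one.mpr <|
    hq.pow_ne_one_of_pos_of_lt hs0 hsp

variable (p q)

def bandMatrix (a b : ℕ) (w : ℕ → ℂ) : Matrix (Fin p) (Fin p) ℂ :=
  Matrix.of fun i j => if a ≤ (i : ℕ) ∧ (j : ℕ) + a = i + b then w (i - a) else 0

/- The matrices of `z` and `∂` acting on `ℂ[z]/(z^p)`, in the basis `z^0, …, z^(p-1)`:
`z^j ↦ z^(j+1)` and `z^j ↦ qNum q j • z^(j-1)`. -/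
def zMatrix : Matrix (Fin p) (Fin p) ℂ :=
  Matrix.of fun i j => if (i : ℕ) = j + 1 then 1 else 0

def dMatrix : Matrix (Fin p) (Fin p) ℂ :=
  Matrix.of fun i j => if (j : ℕ) = i + 1 then qNum q j else 0

variable {p q}

lemma one_eq_bandMatrix : (1 : Matrix (Fin p) (Fin p) ℂ) = bandMatrix p 0 0 (fun _ => 1) := by
  ext i j
  simp [bandMatrix, Matrix.one_apply, Fin.ext_iff, eq_comm]

lemma bandMatrix_eq_zero {a b : ℕ} (h : p ≤ a ∨ p ≤ b) (w : ℕ → ℂ) :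
    bandMatrix p a b w = 0 := by
  ext i j
  have := i.isLt
  have := j.isLt
  simp only [bandMatrix, Matrix.of_apply, Matrix.zero_apply]
  rw [if_neg (by omega)]

lemma zMatrix_mul_apply (M : Matrix (Fin p) (Fin p) ℂ) (i j : Fin p) :
    (zMatrix p * M) i j = if h : 0 < (i : ℕ) then M ⟨i - 1, by omega⟩ j else 0 := by
  rw [Matrix.mul_apply]
  split_ifs with hi
  · rw [Finset.sum_eq_single ⟨i - 1, by omega⟩ (fun k _ hk => ?_) (by simp)]
    · simp [zMatrix, Nat.sub_add_cancel hi]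
    · have : (i : ℕ) ≠ k + 1 := fun h => hk (Fin.ext (show (k : ℕ) = i - 1 by omega))
      simp [zMatrix, this]
  · exact Finset.sum_eq_zero fun k _ => by simp [zMatrix, show (i : ℕ) = 0 by omega]

lemma mul_zMatrix_apply (M : Matrix (Fin p) (Fin p) ℂ) (i j : Fin p) :
    (M * zMatrix p) i j = if h : (j : ℕ) + 1 < p then M i ⟨j + 1, h⟩ else 0 := by
  rw [Matrix.mul_apply]
  split_ifs with hj
  · rw [Finset.sum_eq_single ⟨j + 1, hj⟩ (fun k _ hk => ?_) (by simp)]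
    · simp [zMatrix]
    · have : (k : ℕ) ≠ j + 1 := fun h => hk (Fin.ext h)
      simp [zMatrix, this]
  · exact Finset.sum_eq_zero fun k _ => by simp [zMatrix, show (k : ℕ) ≠ j + 1 by omega]

lemma mul_dMatrix_apply (M : Matrix (Fin p) (Fin p) ℂ) (i j : Fin p) :
    (M * dMatrix p q) i j =
      if h : 0 < (j : ℕ) then M i ⟨j - 1, by omega⟩ * qNum q j else 0 := by
  rw [Matrix.mul_apply]
  split_ifs with hj
  · rw [Finset.sum_eq_single ⟨j - 1, by omega⟩ (fun k _ hk => ?_) (by simp)]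
    · simp [dMatrix, Nat.sub_add_cancel hj]
    · have : (j : ℕ) ≠ k + 1 := fun h => hk (Fin.ext (show (k : ℕ) = j - 1 by omega))
      simp [dMatrix, this]
  · exact Finset.sum_eq_zero fun k _ => by simp [dMatrix, show (j : ℕ) = 0 by omega]

lemma zMatrix_mul_bandMatrix (a b : ℕ) (w : ℕ → ℂ) :
    zMatrix p * bandMatrix p a b w = bandMatrix p (a + 1) b w := by
  ext i j
  rw [zMatrix_mul_apply]
  split_ifs with hi
  · simp only [bandMatrix, Matrix.of_apply, Nat.sub_sub, add_comm 1 a]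
    congr 1
    simp only [eq_iff_iff]
    omega
  · simp only [bandMatrix, Matrix.of_apply]
    rw [if_neg (by omega)]

lemma bandMatrix_mul_dMatrix (a b : ℕ) (w : ℕ → ℂ) :
    bandMatrix p a b w * dMatrix p q =
      bandMatrix p a (b + 1) (fun k => w k * qNum q (k + b + 1)) := by
  ext i j
  rw [mul_dMatrix_apply]
  split_ifs with hj
  · simp only [bandMatrix, Matrix.of_apply]
    by_cases h : a ≤ (i : ℕ) ∧ (j : ℕ) + a = i + (b + 1)
    · rw [if_pos (by omega), if_pos h, show (j : ℕ) = i - a + b + 1 by omega]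
    · rw [if_neg (by omega), if_neg h, zero_mul]
  · simp only [bandMatrix, Matrix.of_apply]
    rw [if_neg (by omega)]

lemma zMatrix_pow_mul_dMatrix_pow (a b : ℕ) :
    zMatrix p ^ a * dMatrix p q ^ b =
      bandMatrix p a b (fun k => ∏ t ∈ Finset.range b, qNum q (k + t + 1)) := by
  induction b with
  | zero =>
    simp only [pow_zero, mul_one, Finset.range_zero, Finset.prod_empty]
    induction a with
    | zero => exact (pow_zero _).trans one_eq_bandMatrix
    | succ a ih => rw [pow_succ', ih, zMatrix_mul_bandMatrix]
  | succ b ih =>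
    simp only [pow_succ, ← mul_assoc, ih, bandMatrix_mul_dMatrix, Finset.prod_range_succ]

lemma zMatrix_pow_self : zMatrix p ^ p = 0 := by
  rw [← mul_one (zMatrix p ^ p), ← pow_zero (dMatrix p 0), zMatrix_pow_mul_dMatrix_pow,
    bandMatrix_eq_zero (Or.inl le_rfl)]

lemma dMatrix_pow_self : dMatrix p q ^ p = 0 := by
  rw [← one_mul (dMatrix p q ^ p), ← pow_zero (zMatrix p), zMatrix_pow_mul_dMatrix_pow,
    bandMatrix_eq_zero (Or.inr le_rfl)]

lemma zMatrix_mul_dMatrix_eq_diagonal :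
    zMatrix p * dMatrix p q = Matrix.diagonal fun i : Fin p => qNum q i := by
  ext i j
  rw [zMatrix_mul_apply, Matrix.diagonal_apply]
  split_ifs with hi hij hij
  · simp only [dMatrix, Matrix.of_apply, hij]
    rw [if_pos (by omega)]
  · simp only [dMatrix, Matrix.of_apply]
    rw [if_neg fun h => hij (Fin.ext (by rw [Fin.val_mk] at h; omega))]
  · rw [show (i : ℕ) = 0 by omega, qNum_zero]
  · rfl

lemma dMatrix_mul_zMatrix_eq_diagonal (hq : qNum q p = 0) :
    dMatrix p q * zMatrix p = Matrix.diagonal fun i : Fin p => qNum q (i + 1) := by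
  ext i j
  rw [mul_zMatrix_apply, Matrix.diagonal_apply]
  split_ifs with hj hij hij
  · simp [dMatrix, hij]
  · simp only [dMatrix, Matrix.of_apply]
    rw [if_neg fun h => hij (Fin.ext (by omega))]
  · rw [show (i : ℕ) + 1 = p by omega, hq]
  · rfl

lemma dMatrix_mul_zMatrix (hq : qNum q p = 0) :
    dMatrix p q * zMatrix p = (q - q⁻¹) • 1 + (q ^ 2)⁻¹ • (zMatrix p * dMatrix p q) := by
  rw [dMatrix_mul_zMatrix_eq_diagonal hq, zMatrix_mul_dMatrix_eq_diagonal]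
  ext i j
  rcases eq_or_ne i j with rfl | hij
  · simp [qNum_succ]
  · simp [hij]

lemma linearIndependent_bandMatrix (w : ℕ → ℕ → ℂ) (hw : ∀ b < p, w b 0 ≠ 0) :
    LinearIndependent ℂ (fun ab : Fin p × Fin p => bandMatrix p ab.1 ab.2 (w ab.2)) := by
  rw [Fintype.linearIndependent_iff]
  rintro g hg ⟨a, b⟩
  induction a using WellFoundedLT.induction generalizing b with
  | ind a ih =>
  -- only `(a, b)` and pairs `(a', b')` with `a' < a` contribute to the entry `(a, b)`
  have hab := congr_fun (congr_fun hg a) b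
  simp only [Matrix.sum_apply, Matrix.smul_apply, smul_eq_mul, Matrix.zero_apply] at hab
  rw [Finset.sum_eq_single (a, b) (fun ab' _ hne => ?_) (by simp)] at hab
  · simpa [bandMatrix, hw b b.isLt, add_comm] using hab
  · obtain ⟨a', b'⟩ := ab'
    rcases lt_or_ge a' a with hlt | hge
    · rw [ih a' hlt b', zero_mul]
    · have : ¬ (a' ≤ (a : ℕ) ∧ (b : ℕ) + a' = a + b') := fun h =>
        hne (by rw [Prod.mk.injEq, Fin.ext_iff, Fin.ext_iff]; omega)
      simp only [bandMatrix, Matrix.of_apply, if_neg this, mul_zero]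

end Matrices

variable (p : ℕ) (q : ℂ)

def mkAlgHom : FreeAlgebra ℂ (Fin 2) →ₐ[ℂ] CqAlg p q := RingQuot.mkAlgHom ℂ (cqRel p q)

@[simp] lemma mkAlgHom_ι_zero : mkAlgHom p q (FreeAlgebra.ι ℂ 0) = Zg p q := rfl

@[simp] lemma mkAlgHom_ι_one : mkAlgHom p q (FreeAlgebra.ι ℂ 1) = Dg p q := rfl

lemma mkAlgHom_surjective : Function.Surjective (mkAlgHom p q) :=
  RingQuot.mkAlgHom_surjective ℂ (cqRel p q)

lemma mkAlgHom_rel {x y : FreeAlgebra ℂ (Fin 2)} (h : cqRel p q x y) :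
    mkAlgHom p q x = mkAlgHom p q y :=
  RingQuot.mkAlgHom_rel ℂ h

lemma Zg_pow_self : Zg p q ^ p = 0 := by
  simpa using mkAlgHom_rel p q .znil

lemma Dg_pow_self : Dg p q ^ p = 0 := by
  simpa using mkAlgHom_rel p q .dnil

lemma Dg_mul_Zg : Dg p q * Zg p q = (q - q⁻¹) • 1 + (q ^ 2)⁻¹ • (Zg p q * Dg p q) := by
  simpa using mkAlgHom_rel p q .dz

lemma exists_Dg_pow_succ_mul_Zg (b : ℕ) :
    ∃ α β : ℂ, Dg p q ^ (b + 1) * Zg p q = α • Dg p q ^ b + β • (Zg p q * Dg p q ^ (b + 1)) := by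
  induction b with
  | zero => exact ⟨q - q⁻¹, (q ^ 2)⁻¹, by simpa using Dg_mul_Zg p q⟩
  | succ b ih =>
    obtain ⟨α, β, h⟩ := ih
    refine ⟨α + β * (q - q⁻¹), β * (q ^ 2)⁻¹, ?_⟩
    rw [pow_succ', mul_assoc, h, mul_add, mul_smul_comm, mul_smul_comm, ← mul_assoc (Dg p q),
      Dg_mul_Zg, add_mul, smul_mul_assoc, smul_mul_assoc, one_mul, mul_assoc, ← pow_succ',
      ← pow_succ']
    module

lemma adjoin_Zg_Dg : Algebra.adjoin ℂ {Zg p q, Dg p q} = ⊤ := by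
  have h : ({Zg p q, Dg p q} : Set (CqAlg p q)) =
      mkAlgHom p q '' Set.range (FreeAlgebra.ι ℂ) := by
    ext x
    simp [Fin.exists_fin_two, eq_comm]
  rw [h, Algebra.adjoin_image, FreeAlgebra.adjoin_range_ι, Algebra.map_top, AlgHom.range_eq_top]
  exact mkAlgHom_surjective p q

def orderedMonomial (ab : Fin p × Fin p) : CqAlg p q :=
  Zg p q ^ (ab.1 : ℕ) * Dg p q ^ (ab.2 : ℕ)

lemma Zg_pow_mul_Dg_pow_mem_span (a b : ℕ) :
    Zg p q ^ a * Dg p q ^ b ∈ Submodule.span ℂ (Set.range (orderedMonomial p q)) := by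
  by_cases hab : a < p ∧ b < p
  · exact Submodule.subset_span ⟨(⟨a, hab.1⟩, ⟨b, hab.2⟩), rfl⟩
  · have hzero : Zg p q ^ a * Dg p q ^ b = 0 := by
      rcases not_and_or.mp hab with ha | hb
      · rw [← Nat.add_sub_of_le (not_lt.mp ha), pow_add, Zg_pow_self, zero_mul, zero_mul]
      · rw [← Nat.add_sub_of_le (not_lt.mp hb), pow_add, Dg_pow_self, zero_mul, mul_zero]
    exact hzero ▸ Submodule.zero_mem _

lemma orderedMonomial_mul_Zg_mem_span (ab : Fin p × Fin p) :
    orderedMonomial p q ab * Zg p q ∈ Submodule.span ℂ (Set.range (orderedMonomial p q)) := by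
  obtain ⟨a, b⟩ := ab
  simp only [orderedMonomial]
  cases (b : ℕ) with
  | zero => simpa [← pow_succ] using Zg_pow_mul_Dg_pow_mem_span p q (a + 1) 0
  | succ c =>
    obtain ⟨α, β, h⟩ := exists_Dg_pow_succ_mul_Zg p q c
    rw [mul_assoc, h, mul_add, mul_smul_comm, mul_smul_comm, ← mul_assoc, ← pow_succ]
    exact add_mem (Submodule.smul_mem _ _ (Zg_pow_mul_Dg_pow_mem_span p q a c))
      (Submodule.smul_mem _ _ (Zg_pow_mul_Dg_pow_mem_span p q (a + 1) (c + 1)))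

lemma span_orderedMonomial : Submodule.span ℂ (Set.range (orderedMonomial p q)) = ⊤ := by
  refine Submodule.span_range_eq_top_of_mul_mem (adjoin_Zg_Dg p q)
    (by simpa using Zg_pow_mul_Dg_pow_mem_span p q 0 0) ?_
  rintro ab x (rfl | rfl)
  · exact orderedMonomial_mul_Zg_mem_span p q ab
  · simpa [orderedMonomial, mul_assoc, ← pow_succ] using
      Zg_pow_mul_Dg_pow_mem_span p q ab.1 (ab.2 + 1)

def toMatrix (hq : qNum q p = 0) : CqAlg p q →ₐ[ℂ] Matrix (Fin p) (Fin p) ℂ :=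
  RingQuot.liftAlgHom ℂ ⟨FreeAlgebra.lift ℂ ![zMatrix p, dMatrix p q], fun x y h => by
    cases h with
    | znil => simp [zMatrix_pow_self]
    | dnil => simp [dMatrix_pow_self]
    | dz => simpa using dMatrix_mul_zMatrix hq⟩

variable {p q}

lemma toMatrix_mkAlgHom (hq : qNum q p = 0) (x : FreeAlgebra ℂ (Fin 2)) :
    toMatrix p q hq (mkAlgHom p q x) = FreeAlgebra.lift ℂ ![zMatrix p, dMatrix p q] x :=
  RingQuot.liftAlgHom_mkAlgHom_apply ℂ _ _ x

@[simp] lemma toMatrix_Zg (hq : qNum q p = 0) : toMatrix p q hq (Zg p q) = zMatrix p := by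
  simpa using toMatrix_mkAlgHom hq (FreeAlgebra.ι ℂ 0)

@[simp] lemma toMatrix_Dg (hq : qNum q p = 0) : toMatrix p q hq (Dg p q) = dMatrix p q := by
  simpa using toMatrix_mkAlgHom hq (FreeAlgebra.ι ℂ 1)

lemma linearIndependent_toMatrix_orderedMonomial (hq : IsPrimitiveRoot (q ^ 2) p) :
    LinearIndependent ℂ
      ((toMatrix p q (qNum_self_eq_zero hq)).toLinearMap ∘ orderedMonomial p q) := by
  convert linearIndependent_bandMatrix (fun b k => ∏ t ∈ Finset.range b, qNum q (k + t + 1))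
    (fun b hb => Finset.prod_ne_zero_iff.mpr fun t ht => ?_) using 1
  · ext1 ab
    simp [orderedMonomial, zMatrix_pow_mul_dMatrix_pow]
  · simp only [Finset.mem_range] at ht
    exact qNum_ne_zero hq (by omega) (by omega)

end CqAlg

theorem cq_basis_and_matrix_algebra
    (p : ℕ) (hp : 2 ≤ p)
    (q : ℂ) (hq : q = Complex.exp (Real.pi * Complex.I / p)) :
    (∃ bas : Module.Basis (Fin p × Fin p) ℂ (CqAlg p q),
        ∀ ab : Fin p × Fin p,
          bas ab = Zg p q ^ (ab.1 : ℕ) * Dg p q ^ (ab.2 : ℕ)) ∧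
      Module.finrank ℂ (CqAlg p q) = p ^ 2 ∧
      Nonempty (CqAlg p q ≃ₐ[ℂ] Matrix (Fin p) (Fin p) ℂ) := by
  have hroot : IsPrimitiveRoot (q ^ 2) p :=
    hq ▸ Complex.isPrimitiveRoot_exp_pi_mul_I_div_sq (by omega)
  have hli := CqAlg.linearIndependent_toMatrix_orderedMonomial hroot
  have hspan := CqAlg.span_orderedMonomial p q
  let bas := Module.Basis.mk hli.of_comp hspan.ge
  have hcard : Fintype.card (Fin p × Fin p) = Module.finrank ℂ (Matrix (Fin p) (Fin p) ℂ) := by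
    simp [Module.finrank_matrix]
  refine ⟨⟨bas, fun ab => Module.Basis.mk_apply _ _ ab⟩, ?_, ⟨AlgEquiv.ofBijective _
    (LinearMap.bijective_of_linearIndependent_comp_of_span_eq_top hspan _ hli hcard)⟩⟩
  rw [Module.finrank_eq_card_basis bas]
  simp [sq]
end
end

section
/- Let B be the Taft Hopf algebra generated by E, k with kE = qEk, E^p = 0, k^{4p} = 1, where q = exp(iπ/p). Define F, κ ∈ B* by ⟨F, E^m k^n⟩ = δ_{m,1} q^{−n}/(q − q⁻¹) and ⟨κ, E^m k^n⟩ = δ_{m,0} q^{−n/2}. Then in B* one has κF = qFκ, F^p = 0, and κ^{4p} = ε (the unit of B*). -/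
/-!
Write `Sₘ` for the span of the tensors `EᵃKⁱ ⊗ EᵇKʲ` with `a + b = m`. Since `E` and `K`
`q`-commute, `Sₘ · Sₘ' ⊆ Sₘ₊ₘ'`, and as `Δ E ∈ S₁`, `Δ K ∈ S₀` we get `Δ (EᵐKⁿ) ∈ Sₘ`. Hence the
convolution of functionals supported on `E`-degrees `d` and `d'` is supported on degree `d + d'`.
Now `κ` and `ε` live in degree `0` and `F` in degree `1`, so `Fᵖ` lives in degree `p`, where `B`
has no basis vectors; `κ^{4p}` lives in degree `0`, where the basis vectors `Kⁿ` are group-like and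
`κ(Kⁿ)^{4p} = 1`; and both `κF` and `Fκ` live in degree `1`, where a direct evaluation on
`Δ(EKⁿ) = Kⁿ ⊗ EKⁿ + EKⁿ ⊗ Kⁿ⁺²` gives the factor `κ(K²)⁻¹ = q`.
-/

open TensorProduct

noncomputable section

variable {T : Type*} [Ring T] [Algebra ℂ T]

/-- Convolution product on `B*` dual to the comultiplication `Δ`. -/
def dualMulT (Δ : T →ₐ[ℂ] T ⊗[ℂ] T) (α β : Module.Dual ℂ T) : Module.Dual ℂ T :=
  (TensorProduct.lift ((LinearMap.mul ℂ ℂ).compl₁₂ α β)).comp Δ.toLinearMap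

/-- Convolution powers in `B*`, with unit the counit. -/
def dualPow (Δ : T →ₐ[ℂ] T ⊗[ℂ] T) (ε0 f : Module.Dual ℂ T) : ℕ → Module.Dual ℂ T
  | 0 => ε0
  | n + 1 => dualMulT Δ f (dualPow Δ ε0 f n)

section QCommuting

variable {R A : Type*} [CommSemiring R] [Semiring A] [Algebra R A] {q : R} {E K : A}

theorem pow_mul_pow_eq_smul_of_mul_eq_smul (h : K * E = q • (E * K)) (a b : ℕ) :
    K ^ a * E ^ b = q ^ (a * b) • (E ^ b * K ^ a) := by
  have hK : ∀ b : ℕ, K * E ^ b = q ^ b • (E ^ b * K) := by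
    intro b
    induction b with
    | zero => simp
    | succ b ih =>
      rw [pow_succ, ← mul_assoc, ih, smul_mul_assoc, mul_assoc, h, mul_smul_comm, smul_smul,
        ← mul_assoc, ← pow_succ, ← pow_succ]
  induction a with
  | zero => simp
  | succ a ih =>
    rw [pow_succ, mul_assoc, hK, mul_smul_comm, ← mul_assoc, ih, smul_mul_assoc, smul_smul,
      mul_assoc, ← pow_succ, ← pow_add, add_comm b, ← Nat.succ_mul]

theorem monomial_mul_monomial (h : K * E = q • (E * K)) (a i b j : ℕ) :
    E ^ a * K ^ i * (E ^ b * K ^ j) = q ^ (i * b) • (E ^ (a + b) * K ^ (i + j)) := by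
  rw [mul_assoc, ← mul_assoc (K ^ i), pow_mul_pow_eq_smul_of_mul_eq_smul h, smul_mul_assoc,
    mul_smul_comm, pow_add, pow_add]
  noncomm_ring

variable (R) in
def totalDegreeSpan (E K : A) (m : ℕ) : Submodule R (A ⊗[R] A) :=
  Submodule.span R {x | ∃ a b i j : ℕ, a + b = m ∧ x = (E ^ a * K ^ i) ⊗ₜ[R] (E ^ b * K ^ j)}

theorem tmul_mem_totalDegreeSpan {a b m : ℕ} (i j : ℕ) (h : a + b = m) :
    (E ^ a * K ^ i) ⊗ₜ[R] (E ^ b * K ^ j) ∈ totalDegreeSpan R E K m :=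
  Submodule.subset_span ⟨a, b, i, j, h, rfl⟩

theorem one_mem_totalDegreeSpan : (1 : A ⊗[R] A) ∈ totalDegreeSpan R E K 0 := by
  rw [Algebra.TensorProduct.one_def]
  simpa using tmul_mem_totalDegreeSpan (R := R) (E := E) (K := K) (a := 0) (b := 0) 0 0 rfl

theorem mul_mem_totalDegreeSpan (h : K * E = q • (E * K)) {m m' : ℕ} {x y : A ⊗[R] A}
    (hx : x ∈ totalDegreeSpan R E K m) (hy : y ∈ totalDegreeSpan R E K m') :
    x * y ∈ totalDegreeSpan R E K (m + m') := by
  have hle : totalDegreeSpan R E K m * totalDegreeSpan R E K m' ≤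
      totalDegreeSpan R E K (m + m') := by
    rw [totalDegreeSpan, totalDegreeSpan, Submodule.span_mul_span, Submodule.span_le]
    rintro _ ⟨_, ⟨a, b, i, j, rfl, rfl⟩, _, ⟨a', b', i', j', rfl, rfl⟩, rfl⟩
    dsimp only
    rw [Algebra.TensorProduct.tmul_mul_tmul, monomial_mul_monomial h, monomial_mul_monomial h,
      smul_tmul_smul]
    exact Submodule.smul_mem _ _ (tmul_mem_totalDegreeSpan _ _ (by ring))
  exact hle (Submodule.mul_mem_mul hx hy)

theorem pow_mem_totalDegreeSpan (h : K * E = q • (E * K)) {d : ℕ} {x : A ⊗[R] A}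
    (hx : x ∈ totalDegreeSpan R E K d) (k : ℕ) : x ^ k ∈ totalDegreeSpan R E K (d * k) := by
  induction k with
  | zero => simpa using one_mem_totalDegreeSpan
  | succ k ih => simpa [pow_succ, mul_add] using mul_mem_totalDegreeSpan h ih hx

theorem comul_pow_mul_pow_mem_totalDegreeSpan (h : K * E = q • (E * K))
    {Δ : A →ₐ[R] A ⊗[R] A} (hΔE : Δ E ∈ totalDegreeSpan R E K 1)
    (hΔK : Δ K ∈ totalDegreeSpan R E K 0) (m n : ℕ) :
    Δ (E ^ m * K ^ n) ∈ totalDegreeSpan R E K m := by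
  rw [map_mul, map_pow, map_pow]
  simpa using mul_mem_totalDegreeSpan h (pow_mem_totalDegreeSpan h hΔE m)
    (pow_mem_totalDegreeSpan h hΔK n)

theorem one_tmul_add_tmul_mem_totalDegreeSpan_one :
    (1 : A) ⊗ₜ[R] E + E ⊗ₜ[R] (K * K) ∈ totalDegreeSpan R E K 1 := by
  refine Submodule.add_mem _ ?_ ?_
  · simpa using tmul_mem_totalDegreeSpan (R := R) (E := E) (K := K) (a := 0) (b := 1) 0 0 rfl
  · simpa [sq] using tmul_mem_totalDegreeSpan (R := R) (E := E) (K := K) (a := 1) (b := 0) 0 2 rfl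

theorem tmul_self_mem_totalDegreeSpan_zero : K ⊗ₜ[R] K ∈ totalDegreeSpan R E K 0 := by
  simpa using tmul_mem_totalDegreeSpan (R := R) (E := E) (K := K) (a := 0) (b := 0) 1 1 rfl

end QCommuting

section Support

variable {R A : Type*} [CommSemiring R] [Semiring A] [Algebra R A] {E K : A}

def IsSupportedInDegree (E K : A) (d : ℕ) (α : Module.Dual R A) : Prop :=
  ∀ m n : ℕ, m ≠ d → α (E ^ m * K ^ n) = 0

theorem isSupportedInDegree_zero (d : ℕ) : IsSupportedInDegree E K d (0 : Module.Dual R A) :=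
  fun _ _ _ => rfl

theorem IsSupportedInDegree.smul {d : ℕ} {α : Module.Dual R A} (hα : IsSupportedInDegree E K d α)
    (c : R) : IsSupportedInDegree E K d (c • α) := fun m n hm => by
  rw [LinearMap.smul_apply, hα m n hm, smul_zero]

theorem AlgHom.isSupportedInDegree_zero (χ : A →ₐ[R] R) (hχ : χ E = 0) :
    IsSupportedInDegree E K 0 χ.toLinearMap := fun m n hm => by
  simp [hχ, zero_pow hm]

theorem ext_of_isSupportedInDegree {ι : Type*} (bas : Module.Basis ι R A) (m n : ι → ℕ)
    (hbas : ∀ i, bas i = E ^ m i * K ^ n i) {d : ℕ} {α β : Module.Dual R A}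
    (hα : IsSupportedInDegree E K d α) (hβ : IsSupportedInDegree E K d β)
    (h : ∀ i, m i = d → α (bas i) = β (bas i)) : α = β :=
  bas.ext fun i => by
    by_cases hi : m i = d
    · exact h i hi
    · rw [hbas, hα _ _ hi, hβ _ _ hi]

theorem pow_mul_pow_eq_basis {p N : ℕ} (hKord : K ^ N = 1)
    (bas : Module.Basis (Fin p × ZMod N) R A)
    (hbas : ∀ mn : Fin p × ZMod N, bas mn = E ^ (mn.1 : ℕ) * K ^ mn.2.val)
    {m : ℕ} (hm : m < p) (n : ℕ) : E ^ m * K ^ n = bas (⟨m, hm⟩, n) := by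
  rw [hbas, ZMod.val_natCast, ← pow_eq_pow_mod n hKord]

theorem isSupportedInDegree_of_basis {p N : ℕ} (hEnil : E ^ p = 0) (hKord : K ^ N = 1)
    (bas : Module.Basis (Fin p × ZMod N) R A)
    (hbas : ∀ mn : Fin p × ZMod N, bas mn = E ^ (mn.1 : ℕ) * K ^ mn.2.val)
    {d : ℕ} {α : Module.Dual R A} (h : ∀ mn : Fin p × ZMod N, (mn.1 : ℕ) ≠ d → α (bas mn) = 0) :
    IsSupportedInDegree E K d α := fun m n hm => by
  rcases lt_or_ge m p with hmp | hmp
  · rw [pow_mul_pow_eq_basis hKord bas hbas hmp]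
    exact h _ hm
  · rw [pow_eq_zero_of_le hmp hEnil, zero_mul, map_zero]

end Support

section Convolution

theorem lift_mul_compl₁₂_tmul (α β : Module.Dual ℂ T) (x y : T) :
    TensorProduct.lift ((LinearMap.mul ℂ ℂ).compl₁₂ α β) (x ⊗ₜ[ℂ] y) = α x * β y := by
  simp

theorem dualMulT_apply (Δ : T →ₐ[ℂ] T ⊗[ℂ] T) (α β : Module.Dual ℂ T) (x : T) :
    dualMulT Δ α β x = TensorProduct.lift ((LinearMap.mul ℂ ℂ).compl₁₂ α β) (Δ x) :=
  rfl

variable {q : ℂ} {E K : T} {Δ : T →ₐ[ℂ] T ⊗[ℂ] T}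

theorem IsSupportedInDegree.dualMulT (hcomm : K * E = q • (E * K))
    (hΔE : Δ E ∈ totalDegreeSpan ℂ E K 1) (hΔK : Δ K ∈ totalDegreeSpan ℂ E K 0)
    {d d' : ℕ} {α β : Module.Dual ℂ T} (hα : IsSupportedInDegree E K d α)
    (hβ : IsSupportedInDegree E K d' β) :
    IsSupportedInDegree E K (d + d') (dualMulT Δ α β) := fun m n hm => by
  have hker : totalDegreeSpan ℂ E K m ≤
      LinearMap.ker (TensorProduct.lift ((LinearMap.mul ℂ ℂ).compl₁₂ α β)) := by
    rw [totalDegreeSpan, Submodule.span_le]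
    rintro _ ⟨a, b, i, j, rfl, rfl⟩
    rw [SetLike.mem_coe, LinearMap.mem_ker, lift_mul_compl₁₂_tmul]
    rcases ne_or_eq a d with ha | rfl
    · rw [hα a i ha, zero_mul]
    · rw [hβ b j (by omega), mul_zero]
  exact hker (comul_pow_mul_pow_mem_totalDegreeSpan hcomm hΔE hΔK m n)

theorem IsSupportedInDegree.dualPow (hcomm : K * E = q • (E * K))
    (hΔE : Δ E ∈ totalDegreeSpan ℂ E K 1) (hΔK : Δ K ∈ totalDegreeSpan ℂ E K 0)
    {d : ℕ} {ε f : Module.Dual ℂ T} (hf : IsSupportedInDegree E K d f)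
    (hε : IsSupportedInDegree E K 0 ε) (j : ℕ) :
    IsSupportedInDegree E K (d * j) (dualPow Δ ε f j) := by
  induction j with
  | zero => exact hε
  | succ j ih =>
    rw [mul_add_one, add_comm]
    exact hf.dualMulT hcomm hΔE hΔK ih

theorem dualPow_apply_of_comul_eq_tmul (ε f : Module.Dual ℂ T) {g : T} (hg : Δ g = g ⊗ₜ[ℂ] g)
    (j : ℕ) : dualPow Δ ε f j g = f g ^ j * ε g := by
  induction j with
  | zero => simp [dualPow]
  | succ j ih => rw [dualPow, dualMulT_apply, hg, lift_mul_compl₁₂_tmul, ih]; ring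

end Convolution

section Taft

variable {q : ℂ} {E K : T} {Δ : T →ₐ[ℂ] T ⊗[ℂ] T}

theorem dualMulT_apply_mul_pow (hΔE : Δ E = 1 ⊗ₜ[ℂ] E + E ⊗ₜ[ℂ] (K * K))
    (hΔK : Δ K = K ⊗ₜ[ℂ] K) (α β : Module.Dual ℂ T) (n : ℕ) :
    dualMulT Δ α β (E * K ^ n) = α (K ^ n) * β (E * K ^ n) + α (E * K ^ n) * β (K ^ (n + 2)) := by
  rw [dualMulT_apply, map_mul, map_pow, hΔE, hΔK, Algebra.TensorProduct.tmul_pow, add_mul,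
    Algebra.TensorProduct.tmul_mul_tmul, Algebra.TensorProduct.tmul_mul_tmul, one_mul,
    map_add, lift_mul_compl₁₂_tmul, lift_mul_compl₁₂_tmul, ← sq, ← pow_add, add_comm 2 n]

theorem dualMulT_eq_smul_dualMulT_of_isSupportedInDegree (hcomm : K * E = q • (E * K))
    (hΔE : Δ E = 1 ⊗ₜ[ℂ] E + E ⊗ₜ[ℂ] (K * K)) (hΔK : Δ K = K ⊗ₜ[ℂ] K)
    {ι : Type*} (bas : Module.Basis ι ℂ T) (m n : ι → ℕ) (hbas : ∀ i, bas i = E ^ m i * K ^ n i)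
    {κ F : Module.Dual ℂ T} (hκ : IsSupportedInDegree E K 0 κ) (hF : IsSupportedInDegree E K 1 F)
    {r : ℂ} (hκK : ∀ a, κ (K ^ a) = r ^ a) (hqr : q * r ^ 2 = 1) :
    dualMulT Δ κ F = q • dualMulT Δ F κ := by
  have hΔE' : Δ E ∈ totalDegreeSpan ℂ E K 1 := hΔE ▸ one_tmul_add_tmul_mem_totalDegreeSpan_one
  have hΔK' : Δ K ∈ totalDegreeSpan ℂ E K 0 := hΔK ▸ tmul_self_mem_totalDegreeSpan_zero
  refine ext_of_isSupportedInDegree bas m n hbas (hκ.dualMulT hcomm hΔE' hΔK' hF)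
    ((hF.dualMulT hcomm hΔE' hΔK' hκ).smul q) fun i hi => ?_
  have hκE : κ (E * K ^ n i) = 0 := by simpa using hκ 1 (n i) one_ne_zero
  have hFK : ∀ a, F (K ^ a) = 0 := fun a => by simpa using hF 0 a zero_ne_one
  rw [hbas, hi, pow_one, LinearMap.smul_apply, dualMulT_apply_mul_pow hΔE hΔK,
    dualMulT_apply_mul_pow hΔE hΔK, hκE, hFK, hκK, hκK, pow_add, smul_eq_mul]
  linear_combination (-(r ^ n i * F (E * K ^ n i))) * hqr

theorem dualPow_eq_zero_of_isSupportedInDegree (hcomm : K * E = q • (E * K))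
    (hΔE : Δ E ∈ totalDegreeSpan ℂ E K 1) (hΔK : Δ K ∈ totalDegreeSpan ℂ E K 0)
    {ι : Type*} (bas : Module.Basis ι ℂ T) (m n : ι → ℕ) (hbas : ∀ i, bas i = E ^ m i * K ^ n i)
    {p : ℕ} (hm : ∀ i, m i < p) {ε F : Module.Dual ℂ T} (hε : IsSupportedInDegree E K 0 ε)
    (hF : IsSupportedInDegree E K 1 F) : dualPow Δ ε F p = 0 :=
  ext_of_isSupportedInDegree bas m n hbas (by simpa using hF.dualPow hcomm hΔE hΔK hε p)
    (isSupportedInDegree_zero p) fun i hi => absurd hi (hm i).ne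

theorem dualPow_eq_unit_of_isSupportedInDegree (hcomm : K * E = q • (E * K))
    (hΔE : Δ E ∈ totalDegreeSpan ℂ E K 1) (hΔK : Δ K = K ⊗ₜ[ℂ] K)
    {ι : Type*} (bas : Module.Basis ι ℂ T) (m n : ι → ℕ) (hbas : ∀ i, bas i = E ^ m i * K ^ n i)
    {ε κ : Module.Dual ℂ T} (hε : IsSupportedInDegree E K 0 ε) (hκ : IsSupportedInDegree E K 0 κ)
    {r : ℂ} (hκK : ∀ a, κ (K ^ a) = r ^ a) {N : ℕ} (hr : r ^ N = 1) : dualPow Δ ε κ N = ε := by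
  have hΔK' : Δ K ∈ totalDegreeSpan ℂ E K 0 := hΔK ▸ tmul_self_mem_totalDegreeSpan_zero
  refine ext_of_isSupportedInDegree bas m n hbas
    (by simpa using hκ.dualPow hcomm hΔE hΔK' hε N) hε fun i hi => ?_
  have hgroupLike : Δ (K ^ n i) = (K ^ n i) ⊗ₜ[ℂ] (K ^ n i) := by
    rw [map_pow, hΔK, Algebra.TensorProduct.tmul_pow]
  rw [hbas, hi, pow_zero, one_mul, dualPow_apply_of_comul_eq_tmul ε κ hgroupLike, hκK, ← pow_mul,
    mul_comm (n i), pow_mul, hr, one_pow, one_mul]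

theorem apply_pow_eq_inv_pow_of_basis {p N : ℕ} (hp : 0 < p) (hKord : K ^ N = 1)
    (bas : Module.Basis (Fin p × ZMod N) ℂ T)
    (hbas : ∀ mn : Fin p × ZMod N, bas mn = E ^ (mn.1 : ℕ) * K ^ mn.2.val)
    {c : ℂ} (hc : c ^ N = 1) {κ : Module.Dual ℂ T}
    (hκ : ∀ mn : Fin p × ZMod N,
      κ (bas mn) = if (mn.1 : ℕ) = 0 then c ^ (-(mn.2.val : ℤ)) else 0) (a : ℕ) :
    κ (K ^ a) = c⁻¹ ^ a := by
  have hKa := pow_mul_pow_eq_basis hKord bas hbas hp a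
  rw [pow_zero, one_mul] at hKa
  rw [hKa, hκ, if_pos rfl, ZMod.val_natCast, zpow_neg, zpow_natCast, ← inv_pow,
    ← pow_eq_pow_mod a (by rw [inv_pow, hc, inv_one])]

end Taft

theorem exp_pi_mul_I_div_two_mul_sq (p : ℕ) :
    Complex.exp (Real.pi * Complex.I / (2 * p)) ^ 2 = Complex.exp (Real.pi * Complex.I / p) := by
  rw [← Complex.exp_nat_mul]
  congr 1
  push_cast
  ring

theorem exp_pi_mul_I_div_two_mul_pow_four_mul {p : ℕ} (hp : p ≠ 0) :
    Complex.exp (Real.pi * Complex.I / (2 * p)) ^ (4 * p) = 1 := by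
  rw [← Complex.exp_nat_mul, ← Complex.exp_two_pi_mul_I]
  congr 1
  push_cast
  field_simp
  ring

theorem taft_dual_relations_general
    (p : ℕ) (hp : 2 ≤ p)
    (q q2 : ℂ)
    (hq : q = Complex.exp (Real.pi * Complex.I / p))
    (hq2 : q2 = Complex.exp (Real.pi * Complex.I / (2 * p)))
    (E K : T)
    (hcomm : K * E = q • (E * K)) (hEnil : E ^ p = 0) (hKord : K ^ (4 * p) = 1)
    (bas : Module.Basis (Fin p × ZMod (4 * p)) ℂ T)
    (hbas : ∀ mn : Fin p × ZMod (4 * p), bas mn = E ^ (mn.1 : ℕ) * K ^ mn.2.val)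
    (Δ : T →ₐ[ℂ] T ⊗[ℂ] T)
    (hΔE : Δ E = 1 ⊗ₜ[ℂ] E + E ⊗ₜ[ℂ] (K * K)) (hΔK : Δ K = K ⊗ₜ[ℂ] K)
    (εa : T →ₐ[ℂ] ℂ) (hεE : εa E = 0)
    (F κ : Module.Dual ℂ T)
    (hF : ∀ mn : Fin p × ZMod (4 * p),
      F (bas mn) = if (mn.1 : ℕ) = 1 then q ^ (-(mn.2.val : ℤ)) / (q - q⁻¹) else 0)
    (hκ : ∀ mn : Fin p × ZMod (4 * p),
      κ (bas mn) = if (mn.1 : ℕ) = 0 then q2 ^ (-(mn.2.val : ℤ)) else 0) :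
    dualMulT Δ κ F = q • dualMulT Δ F κ ∧
    dualPow Δ εa.toLinearMap F p = 0 ∧
    dualPow Δ εa.toLinearMap κ (4 * p) = εa.toLinearMap := by
  have hq2sq : q2 ^ 2 = q := by rw [hq, hq2, exp_pi_mul_I_div_two_mul_sq]
  have hq2pow : q2 ^ (4 * p) = 1 := by rw [hq2, exp_pi_mul_I_div_two_mul_pow_four_mul (by omega)]
  have hqr : q * q2⁻¹ ^ 2 = 1 := by
    rw [inv_pow, hq2sq, mul_inv_cancel₀ (by rw [hq]; exact Complex.exp_ne_zero _)]
  have hr : q2⁻¹ ^ (4 * p) = 1 := by rw [inv_pow, hq2pow, inv_one]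
  have hκK := apply_pow_eq_inv_pow_of_basis (by omega) hKord bas hbas hq2pow hκ
  have hΔE' : Δ E ∈ totalDegreeSpan ℂ E K 1 := hΔE ▸ one_tmul_add_tmul_mem_totalDegreeSpan_one
  have hΔK' : Δ K ∈ totalDegreeSpan ℂ E K 0 := hΔK ▸ tmul_self_mem_totalDegreeSpan_zero
  have hεsupp := εa.isSupportedInDegree_zero (K := K) hεE
  have hFsupp : IsSupportedInDegree E K 1 F :=
    isSupportedInDegree_of_basis hEnil hKord bas hbas fun mn h => by rw [hF, if_neg h]
  have hκsupp : IsSupportedInDegree E K 0 κ :=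
    isSupportedInDegree_of_basis hEnil hKord bas hbas fun mn h => by rw [hκ, if_neg h]
  exact ⟨dualMulT_eq_smul_dualMulT_of_isSupportedInDegree hcomm hΔE hΔK bas _ _ hbas hκsupp
      hFsupp hκK hqr,
    dualPow_eq_zero_of_isSupportedInDegree hcomm hΔE' hΔK' bas _ _ hbas (fun mn => mn.1.isLt)
      hεsupp hFsupp,
    dualPow_eq_unit_of_isSupportedInDegree hcomm hΔE' hΔK bas _ _ hbas hεsupp hκsupp hκK hr⟩

theorem taft_dual_relations
    (p : ℕ) (hp : 2 ≤ p)
    (q q2 : ℂ)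
    (hq : q = Complex.exp (Real.pi * Complex.I / p))
    (hq2 : q2 = Complex.exp (Real.pi * Complex.I / (2 * p)))
    (E K : T)
    (hcomm : K * E = q • (E * K)) (hEnil : E ^ p = 0) (hKord : K ^ (4 * p) = 1)
    (bas : Module.Basis (Fin p × ZMod (4 * p)) ℂ T)
    (hbas : ∀ mn : Fin p × ZMod (4 * p), bas mn = E ^ (mn.1 : ℕ) * K ^ mn.2.val)
    (Δ : T →ₐ[ℂ] T ⊗[ℂ] T)
    (hΔE : Δ E = 1 ⊗ₜ[ℂ] E + E ⊗ₜ[ℂ] (K * K)) (hΔK : Δ K = K ⊗ₜ[ℂ] K)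
    (εa : T →ₐ[ℂ] ℂ) (hεE : εa E = 0) (hεK : εa K = 1)
    (F κ : Module.Dual ℂ T)
    (hF : ∀ mn : Fin p × ZMod (4 * p),
      F (bas mn) = if (mn.1 : ℕ) = 1 then q ^ (-(mn.2.val : ℤ)) / (q - q⁻¹) else 0)
    (hκ : ∀ mn : Fin p × ZMod (4 * p),
      κ (bas mn) = if (mn.1 : ℕ) = 0 then q2 ^ (-(mn.2.val : ℤ)) else 0) :
    dualMulT Δ κ F = q • dualMulT Δ F κ ∧
    dualPow Δ εa.toLinearMap F p = 0 ∧
    dualPow Δ εa.toLinearMap κ (4 * p) = εa.toLinearMap :=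
  taft_dual_relations_general p hp q q2 hq hq2 E K hcomm hEnil hKord bas hbas Δ hΔE hΔK εa hεE F κ
    hF hκ
end
end
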